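/- For every cd-monomial v of degree n ≥ 0, β(S(v)) = β(v), where S is the linear map on cd-monomials defined by S(c^{m_1} d c^{m_2} d ⋯ d c^{m_k}) = Σ_{i=1}^{k} c^{m_1}⋯d c^{m_i −1} d⋯c^{m_k} + Σ_{i=1}^{k−1} c^{m_1}⋯d c^{m_i + m_{i+1} + 1} d⋯c^{m_k} (terms with negative exponents are omitted), with S(1)=e. -/

import Mathlib

open scoped TensorProduct

/-- cd-monomials: `false` is the letter `c`, `true` is the letter `d`. -/
abbrev Mon := List Bool

/-- The polynomial algebra `F = ℚ⟨c,d⟩`. -/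
abbrev F := MonoidAlgebra ℚ (FreeMonoid Bool)

noncomputable def mono (w : Mon) : F := MonoidAlgebra.single (FreeMonoid.ofList w) 1

noncomputable def cF : F := mono [false]
noncomputable def dF : F := mono [true]

noncomputable def gLetter : Bool → F
  | false => dF
  | true  => cF * dF

noncomputable def gMon : Mon → F
  | [] => 0
  | a :: t => gLetter a * mono t + mono [a] * gMon t

/-- The derivation `G` with `G c = d`, `G d = cd`. -/
noncomputable def G : F →ₗ[ℚ] F :=
  (Finsupp.lsum ℚ fun w => LinearMap.toSpanSingleton ℚ F (gMon (FreeMonoid.toList w)))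
    ∘ₗ (MonoidAlgebra.coeffLinearEquiv ℚ).toLinearMap

/-- `Psi n` is the cd-index of the Boolean lattice of rank `n+1`. -/
noncomputable def Psi : ℕ → F
  | 0 => 1
  | n+1 => Psi n * cF + G (Psi n)

/-- degree of a cd-monomial (`c` has degree 1, `d` degree 2). -/
def deg (w : Mon) : ℕ := w.length + w.count true

/-- `beta v` : coefficient of `v` in the cd-index of the Boolean lattice of rank `deg v + 1`. -/
noncomputable def beta (w : Mon) : ℚ := (Psi (deg w)).coeff (FreeMonoid.ofList w)
/-- `F̂ = ℚ·e ⊕ F`, with basis indexed by `Option Mon`; `none` is the element `e`. -/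
abbrev Fhat := Option Mon →₀ ℚ

noncomputable def ehat : Fhat := Finsupp.single none 1

/-- the inclusion `F → F̂`. -/
noncomputable def ι : F →ₗ[ℚ] Fhat :=
  (Finsupp.lsum ℚ fun w =>
    LinearMap.toSpanSingleton ℚ Fhat (Finsupp.single (some (FreeMonoid.toList w)) 1))
    ∘ₗ (MonoidAlgebra.coeffLinearEquiv ℚ).toLinearMap

noncomputable def deltaLetter : Bool → F ⊗[ℚ] F
  | false => (2 : ℚ) • ((1 : F) ⊗ₜ (1 : F))
  | true  => (1 : F) ⊗ₜ cF + cF ⊗ₜ (1 : F)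

/-- `Δ` on monomials, via `Δ(uv) = Δ(u)v + uΔ(v)`. -/
noncomputable def deltaMon : Mon → F ⊗[ℚ] F
  | [] => 0
  | a :: t =>
      TensorProduct.map LinearMap.id (LinearMap.mulRight ℚ (mono t)) (deltaLetter a)
        + TensorProduct.map (LinearMap.mulLeft ℚ (mono [a])) LinearMap.id (deltaMon t)

noncomputable def deltaHatB : Option Mon → Fhat ⊗[ℚ] Fhat
  | none => ehat ⊗ₜ ehat
  | some w => TensorProduct.map ι ι (deltaMon w) + ehat ⊗ₜ ι (mono w) + ι (mono w) ⊗ₜ ehat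

/-- The coproduct `Δ̂` on `F̂`. -/
noncomputable def deltaHat : Fhat →ₗ[ℚ] Fhat ⊗[ℚ] Fhat :=
  Finsupp.lsum ℚ fun o => LinearMap.toSpanSingleton ℚ (Fhat ⊗[ℚ] Fhat) (deltaHatB o)

noncomputable def gHatB : Option Mon → Fhat
  | none => ι 1
  | some w => ι (gMon w + mono w * cF)

/-- The map `Ĝ` on `F̂`: `Ĝ e = 1`, `Ĝ u = G u + u c`. -/
noncomputable def gHat : Fhat →ₗ[ℚ] Fhat :=
  Finsupp.lsum ℚ fun o => LinearMap.toSpanSingleton ℚ Fhat (gHatB o)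


/-- The cd-monomial `c^{m_1} d c^{m_2} d ⋯ d c^{m_k}` associated to the list
`(m_1, …, m_k)`. -/
def ofExps : List ℕ → Mon
  | [] => []
  | [m] => List.replicate m false
  | m :: t => List.replicate m false ++ true :: ofExps t

/-- The list of exponents `(m_1, …, m_k)` of a cd-monomial
`c^{m_1} d c^{m_2} d ⋯ d c^{m_k}`. -/
def toExps : Mon → List ℕ
  | [] => [0]
  | false :: t =>
      match toExps t with
      | [] => [1]
      | m :: r => (m + 1) :: r
  | true :: t => 0 :: toExps t

/-- The part of `S` lying in `F`, defined on exponent lists by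
`S(m_1,…,m_k) = Σ_i (m_1,…,m_i−1,…,m_k) + Σ_{i<k} (m_1,…,m_i+m_{i+1}+1,…,m_k)`,
terms with a negative entry being omitted. -/
noncomputable def SexpF : List ℕ → F
  | [] => 0
  | [m] => if m = 0 then 0 else mono (List.replicate (m - 1) false)
  | m :: n :: t =>
      (if m = 0 then 0 else mono (ofExps ((m - 1) :: n :: t)))
        + mono (ofExps ((m + n + 1) :: t))
        + mono (List.replicate m false ++ [true]) * SexpF (n :: t)

/-- The map `S` on cd-monomials, with values in `F̂` (note `S(1) = e`). -/
noncomputable def Smap (w : Mon) : Fhat :=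
  ι (SexpF (toExps w)) + (if w = [] then ehat else 0)

/-- The linear extension of `S` to `F̂`, with `S(e) = 0`. -/
noncomputable def SHat : Fhat →ₗ[ℚ] Fhat :=
  Finsupp.lsum ℚ fun o =>
    LinearMap.toSpanSingleton ℚ Fhat (match o with | none => 0 | some w => Smap w)

/-- `β` extended linearly to `F`. -/
noncomputable def betaF : F →ₗ[ℚ] ℚ :=
  (Finsupp.lsum ℚ fun w => LinearMap.toSpanSingleton ℚ ℚ (beta (FreeMonoid.toList w)))
    ∘ₗ (MonoidAlgebra.coeffLinearEquiv ℚ).toLinearMap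

/-- `β` extended linearly to `F̂`, with `β(e) = 1`. -/
noncomputable def betaHat : Fhat →ₗ[ℚ] ℚ :=
  Finsupp.lsum ℚ fun o =>
    LinearMap.toSpanSingleton ℚ ℚ (match o with | none => 1 | some w => beta w)

/-! ### Auxiliary development for `beta_S` -/

section Aux

lemma cadd (f g : F) (x : FreeMonoid Bool) : (f + g).coeff x = f.coeff x + g.coeff x := rfl
lemma csub (f g : F) (x : FreeMonoid Bool) : (f - g).coeff x = f.coeff x - g.coeff x := rfl

lemma mono_apply (u v : Mon) : (mono u).coeff (FreeMonoid.ofList v) = if u = v then 1 else 0 := by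
  by_cases h : u = v
  · subst h; simp [mono]
  · rw [if_neg h, mono, MonoidAlgebra.coeff_single, Finsupp.single_eq_of_ne']
    exact fun hc => h (FreeMonoid.ofList.injective hc)

lemma mono_mul (u v : Mon) : mono u * mono v = mono (u ++ v) := by
  simp [mono, MonoidAlgebra.single_mul_single, FreeMonoid.ofList_append]

lemma single_smul_mono (x : FreeMonoid Bool) (r : ℚ) :
    (MonoidAlgebra.single x r : F) = r • mono (FreeMonoid.toList x) := by
  simp [mono, FreeMonoid.ofList_toList, MonoidAlgebra.smul_single]

lemma single_mul_apply_nil (a : Bool) (q : F) :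
    (mono [a] * q).coeff (FreeMonoid.ofList []) = 0 := by
  induction q using MonoidAlgebra.induction_linear with
  | zero => simp
  | add f g hf hg => rw [mul_add, cadd, hf, hg, add_zero]
  | single x r =>
      rw [single_smul_mono, mul_smul_comm, MonoidAlgebra.coeff_smul_apply, mono_mul, mono_apply]
      simp

lemma single_mul_apply_cons (a b : Bool) (q : F) (v : Mon) :
    (mono [a] * q).coeff (FreeMonoid.ofList (b :: v)) =
      if a = b then q.coeff (FreeMonoid.ofList v) else 0 := by
  induction q using MonoidAlgebra.induction_linear with
  | zero => simp
  | add f g hf hg =>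
      rw [mul_add, cadd, hf, hg, cadd]
      split <;> simp
  | single x r =>
      rw [single_smul_mono, mul_smul_comm, MonoidAlgebra.coeff_smul_apply, mono_mul, mono_apply,
        MonoidAlgebra.coeff_smul_apply, mono_apply]
      by_cases hab : a = b
      · subst hab
        simp [List.cons.injEq]
      · simp only [List.cons_append, List.cons.injEq]
        have : ¬ (a = b ∧ FreeMonoid.toList x ++ [] = v) := fun h => hab h.1
        simp [hab]

lemma gLetter_false_mul (t : Mon) : gLetter false * mono t = mono (true :: t) := by
  rw [gLetter, dF, mono_mul]; rfl

lemma gLetter_true_mul (t : Mon) : gLetter true * mono t = mono (false :: true :: t) := by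
  rw [gLetter, cF, dF, mono_mul, mono_mul]; rfl

lemma gMon_nil_apply (u : Mon) : (gMon u).coeff (FreeMonoid.ofList []) = 0 := by
  induction u with
  | nil => simp [gMon]
  | cons a t ih =>
      rw [gMon, cadd, single_mul_apply_nil, add_zero]
      cases a
      · rw [gLetter_false_mul, mono_apply]; simp
      · rw [gLetter_true_mul, mono_apply]; simp

lemma toExps_true (t : Mon) : toExps (true :: t) = 0 :: toExps t := rfl

lemma toExps_false (t : Mon) {m : ℕ} {r : List ℕ} (h : toExps t = m :: r) :
    toExps (false :: t) = (m + 1) :: r := by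
  simp [toExps, h]

lemma exists_toExps (w : Mon) : ∃ m r, toExps w = m :: r := by
  induction w with
  | nil => exact ⟨0, [], rfl⟩
  | cons a t ih =>
      cases a
      · obtain ⟨m, r, h⟩ := ih
        exact ⟨m + 1, r, toExps_false t h⟩
      · exact ⟨0, toExps t, rfl⟩

lemma ofExps_succ (m : ℕ) (r : List ℕ) :
    ofExps ((m + 1) :: r) = false :: ofExps (m :: r) := by
  cases r <;> simp [ofExps, List.replicate_succ]

lemma ofExps_toExps (w : Mon) : ofExps (toExps w) = w := by
  induction w with
  | nil => simp [toExps, ofExps]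
  | cons a t ih =>
      obtain ⟨m, r, h⟩ := exists_toExps t
      cases a
      · rw [toExps_false t h, ofExps_succ, ← h, ih]
      · rw [toExps_true, h]
        show List.replicate 0 false ++ true :: ofExps (m :: r) = true :: t
        rw [← h, ih]
        rfl

lemma toExps_zero_cases {w : Mon} {r : List ℕ} (h : toExps w = 0 :: r) :
    (w = [] ∧ r = []) ∨ ∃ t, w = true :: t ∧ toExps t = r := by
  cases w with
  | nil =>
      have h' : (0 : ℕ) :: ([] : List ℕ) = 0 :: r := h
      injection h' with _ h2
      exact Or.inl ⟨rfl, h2.symm⟩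
  | cons a t =>
      cases a
      · obtain ⟨m, r', ht⟩ := exists_toExps t
        rw [toExps_false t ht] at h
        injection h with h1 _
        omega
      · rw [toExps_true] at h
        injection h with _ h2
        exact Or.inr ⟨t, rfl, h2⟩

lemma toExps_succ_cases {w : Mon} {m : ℕ} {r : List ℕ} (h : toExps w = (m + 1) :: r) :
    ∃ t, w = false :: t ∧ toExps t = m :: r := by
  cases w with
  | nil =>
      have h' : (0 : ℕ) :: ([] : List ℕ) = (m + 1) :: r := h
      injection h' with h1 _
      omega
  | cons a t =>
      cases a
      · obtain ⟨k, r', ht⟩ := exists_toExps t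
        rw [toExps_false t ht] at h
        injection h with h1 h2
        refine ⟨t, rfl, ?_⟩
        rw [ht, h2]
        congr 1
        omega
      · rw [toExps_true] at h
        injection h with h1 _
        omega

noncomputable def Dw : Mon → F
  | false :: t => mono t
  | _ => 0

@[simp] lemma Dw_nil : Dw [] = 0 := rfl
@[simp] lemma Dw_true (t : Mon) : Dw (true :: t) = 0 := rfl
@[simp] lemma Dw_false (t : Mon) : Dw (false :: t) = mono t := rfl

lemma Dw_apply (w t : Mon) :
    (Dw w).coeff (FreeMonoid.ofList t) = if w = false :: t then 1 else 0 := by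
  cases w with
  | nil => simp [Finsupp.coe_zero]
  | cons a s =>
      cases a
      · rw [Dw_false, mono_apply]
        by_cases h : s = t
        · simp [h]
        · rw [if_neg h, if_neg]
          simp [h]
      · rw [Dw_true]
        rw [if_neg (by simp)]
        simp [Finsupp.coe_zero]

noncomputable def T (w : Mon) : F := SexpF (toExps w)

lemma T_nil : T [] = 0 := by
  show SexpF [0] = 0
  simp [SexpF]

lemma T_true (w : Mon) : T (true :: w) = mono (false :: w) + dF * T w := by
  obtain ⟨m, r, h⟩ := exists_toExps w
  show SexpF (toExps (true :: w)) = _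
  rw [toExps_true, h]
  show (if (0:ℕ) = 0 then 0 else mono (ofExps ((0-1) :: m :: r)))
      + mono (ofExps ((0 + m + 1) :: r))
      + mono (List.replicate 0 false ++ [true]) * SexpF (m :: r) = _
  rw [if_pos rfl, zero_add]
  have h1 : (0 + m + 1) = m + 1 := by omega
  rw [h1, ofExps_succ, ← h, ofExps_toExps]
  have h2 : List.replicate 0 false ++ [true] = [true] := rfl
  rw [h2]
  show mono (false :: w) + dF * SexpF (toExps w) = _
  rfl

lemma T_false (w : Mon) : T (false :: w) = mono w + cF * (T w - Dw w) := by
  obtain ⟨m, r, h⟩ := exists_toExps w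
  show SexpF (toExps (false :: w)) = _
  rw [toExps_false w h]
  cases r with
  | nil =>
      have hw : w = List.replicate m false := by
        conv_lhs => rw [← ofExps_toExps w, h]
        rfl
      show SexpF [m + 1] = _
      have hS1 : SexpF [m + 1] = mono (List.replicate m false) := by
        simp [SexpF]
      have hTD : T w - Dw w = 0 := by
        show SexpF (toExps w) - Dw w = 0
        rw [h]
        cases m with
        | zero =>
            have : w = [] := by simpa using hw
            subst this
            show SexpF [0] - Dw [] = 0
            simp [SexpF]
        | succ s =>
            have : w = false :: List.replicate s false := by
              rw [hw, List.replicate_succ]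
            rw [this]
            show SexpF [s + 1] - mono (List.replicate s false) = 0
            simp [SexpF]
      rw [hS1, hTD, mul_zero, add_zero, hw]
  | cons n t =>
      show (if m + 1 = 0 then 0 else mono (ofExps ((m + 1 - 1) :: n :: t)))
          + mono (ofExps ((m + 1 + n + 1) :: t))
          + mono (List.replicate (m + 1) false ++ [true]) * SexpF (n :: t) = _
      rw [if_neg (by omega)]
      have hm1 : m + 1 - 1 = m := by omega
      rw [hm1]
      have hw : mono (ofExps (m :: n :: t)) = mono w := by rw [← h, ofExps_toExps]
      have hTw : T w = (if m = 0 then 0 else mono (ofExps ((m - 1) :: n :: t)))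
          + mono (ofExps ((m + n + 1) :: t))
          + mono (List.replicate m false ++ [true]) * SexpF (n :: t) := by
        show SexpF (toExps w) = _
        rw [h]
        cases m with
        | zero => rfl
        | succ s => rfl
      have hD : Dw w = (if m = 0 then 0 else mono (ofExps ((m - 1) :: n :: t))) := by
        cases m with
        | zero =>
            rw [if_pos rfl]
            rcases toExps_zero_cases h with ⟨hw', _⟩ | ⟨t', ht', _⟩
            · subst hw'; rfl
            · subst ht'; rfl
        | succ s =>
            rw [if_neg (by omega)]
            obtain ⟨t', ht', hts⟩ := toExps_succ_cases h
            subst ht'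
            rw [Dw_false]
            have : (s + 1 - 1 : ℕ) = s := by omega
            rw [this, ← hts, ofExps_toExps]
      have hsub : T w - Dw w = mono (ofExps ((m + n + 1) :: t))
          + mono (List.replicate m false ++ [true]) * SexpF (n :: t) := by
        rw [hTw, hD]; abel
      rw [hsub, hw]
      have e1 : cF * mono (ofExps ((m + n + 1) :: t)) = mono (ofExps ((m + 1 + n + 1) :: t)) := by
        rw [cF, mono_mul]
        have : (m + 1 + n + 1) = (m + n + 1) + 1 := by omega
        rw [this]
        conv_rhs => rw [ofExps_succ]
        rfl
      have e2 : cF * (mono (List.replicate m false ++ [true]) * SexpF (n :: t))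
          = mono (List.replicate (m + 1) false ++ [true]) * SexpF (n :: t) := by
        rw [← mul_assoc, cF, mono_mul]
        congr 2
      rw [mul_add, e1, e2]
      abel

lemma gMon_cons (a : Bool) (t : Mon) :
    gMon (a :: t) = gLetter a * mono t + mono [a] * gMon t := rfl

lemma key (w : Mon) : ∀ u : Mon,
    (mono (u ++ [false])).coeff (FreeMonoid.ofList w) + (gMon u).coeff (FreeMonoid.ofList w)
      = (T w).coeff (FreeMonoid.ofList u) := by
  induction w with
  | nil =>
      intro u
      rw [gMon_nil_apply, add_zero, mono_apply, T_nil, if_neg (by simp)]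
      simp
  | cons b w' ih =>
      intro u
      cases u with
      | nil =>
          show (mono [false]).coeff (FreeMonoid.ofList (b :: w')) + (gMon []).coeff (FreeMonoid.ofList (b :: w'))
              = (T (b :: w')).coeff (FreeMonoid.ofList [])
          rw [show gMon [] = (0 : F) from rfl]
          simp only [MonoidAlgebra.coeff_zero, Finsupp.coe_zero, Pi.zero_apply, add_zero]
          cases b
          · rw [T_false, cadd, cF, single_mul_apply_nil, add_zero, mono_apply,
              mono_apply]
            simp only [List.cons.injEq, true_and]
            by_cases h : w' = []
            · rw [if_pos h.symm, if_pos h]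
            · rw [if_neg (fun hc => h hc.symm), if_neg h]
          · rw [T_true, cadd, dF, single_mul_apply_nil, add_zero, mono_apply,
              mono_apply, if_neg (by simp), if_neg (by simp)]
      | cons a t =>
          have iht := ih t
          rw [mono_apply] at iht
          rw [gMon_cons, cadd]
          cases b
          · rw [T_false, cadd, cF, single_mul_apply_cons]
            cases a
            · rw [gLetter_false_mul, single_mul_apply_cons (q := T w' - Dw w'), if_pos rfl,
                if_pos rfl, csub, Dw_apply,
                mono_apply ((false :: t) ++ [false]) (false :: w'),
                mono_apply (true :: t) (false :: w'),
                if_neg (show ¬(true :: t : Mon) = false :: w' by simp), zero_add,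
                mono_apply w' (false :: t)]
              simp only [List.cons_append, List.cons.injEq, true_and]
              rw [iht]
              ring
            · rw [gLetter_true_mul, single_mul_apply_cons (q := T w' - Dw w'),
                if_neg (show ¬true = false by simp), if_neg (show ¬false = true by simp),
                add_zero, add_zero,
                mono_apply ((true :: t) ++ [false]) (false :: w'), if_neg (by simp), zero_add,
                mono_apply (false :: true :: t) (false :: w'),
                mono_apply w' (true :: t)]
              simp only [List.cons.injEq, true_and]
              by_cases h : w' = true :: t
              · rw [if_pos h.symm, if_pos h]
              · rw [if_neg (fun hc => h hc.symm), if_neg h]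
          · rw [T_true, cadd, dF, single_mul_apply_cons]
            cases a
            · rw [gLetter_false_mul, single_mul_apply_cons (q := T w'),
                if_neg (show ¬false = true by simp), if_neg (show ¬true = false by simp),
                add_zero, add_zero,
                mono_apply ((false :: t) ++ [false]) (true :: w'), if_neg (by simp), zero_add,
                mono_apply (true :: t) (true :: w'),
                mono_apply (false :: w') (false :: t)]
              simp only [List.cons.injEq, true_and]
              by_cases h : t = w'
              · rw [if_pos h, if_pos h.symm]
              · rw [if_neg h, if_neg (fun hc => h hc.symm)]
            · rw [gLetter_true_mul, if_pos rfl,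
                show ((true :: t) ++ [false] : Mon) = [true] ++ (t ++ [false]) from rfl,
                ← mono_mul, single_mul_apply_cons true true (mono (t ++ [false])) w',
                if_pos rfl,
                single_mul_apply_cons true true (T w') t, if_pos rfl,
                mono_apply (false :: true :: t) (true :: w'), if_neg (by simp), zero_add,
                mono_apply (false :: w') (true :: t), if_neg (by simp), zero_add]
              exact ih t

lemma deg_false (t : Mon) : deg (false :: t) = deg t + 1 := by
  simp [deg, List.count_cons]
  omega

lemma deg_true (t : Mon) : deg (true :: t) = deg t + 2 := by
  simp [deg, List.count_cons]
  omega

lemma T_deg (w : Mon) : ∀ u : Mon, (T w).coeff (FreeMonoid.ofList u) ≠ 0 → deg u + 1 = deg w := by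
  induction w with
  | nil =>
      intro u hu
      rw [T_nil] at hu
      simp at hu
  | cons b w' ih =>
      intro u hu
      cases b
      · rw [T_false, cadd] at hu
        have : (mono w').coeff (FreeMonoid.ofList u) ≠ 0
            ∨ (cF * (T w' - Dw w')).coeff (FreeMonoid.ofList u) ≠ 0 := by
          by_contra hc
          push_neg at hc
          rw [hc.1, hc.2] at hu
          simp at hu
        rcases this with h1 | h2
        · rw [mono_apply] at h1
          have : w' = u := by by_contra hne; rw [if_neg hne] at h1; simp at h1
          subst this
          rw [deg_false]
        · cases u with
          | nil => rw [cF, single_mul_apply_nil] at h2; simp at h2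
          | cons a v =>
              rw [cF, single_mul_apply_cons] at h2
              cases a
              · rw [if_pos rfl, csub] at h2
                have : (T w').coeff (FreeMonoid.ofList v) ≠ 0 ∨ (Dw w').coeff (FreeMonoid.ofList v) ≠ 0 := by
                  by_contra hc
                  push_neg at hc
                  rw [hc.1, hc.2] at h2
                  simp at h2
                rcases this with h3 | h4
                · have := ih v h3
                  rw [deg_false, deg_false]
                  omega
                · rw [Dw_apply] at h4
                  have : w' = false :: v := by
                    by_contra hne; rw [if_neg hne] at h4; simp at h4
                  subst this
                  rw [deg_false, deg_false, deg_false]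
              · rw [if_neg (by simp)] at h2
                simp at h2
      · rw [T_true, cadd] at hu
        have : (mono (false :: w')).coeff (FreeMonoid.ofList u) ≠ 0
            ∨ (dF * T w').coeff (FreeMonoid.ofList u) ≠ 0 := by
          by_contra hc
          push_neg at hc
          rw [hc.1, hc.2] at hu
          simp at hu
        rcases this with h1 | h2
        · rw [mono_apply] at h1
          have : false :: w' = u := by by_contra hne; rw [if_neg hne] at h1; simp at h1
          subst this
          rw [deg_false, deg_true]
        · cases u with
          | nil => rw [dF, single_mul_apply_nil] at h2; simp at h2
          | cons a v =>
              rw [dF, single_mul_apply_cons] at h2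
              cases a
              · rw [if_neg (by simp)] at h2
                simp at h2
              · rw [if_pos rfl] at h2
                have := ih v h2
                rw [deg_true, deg_true]
                omega

lemma pair_comm (p q : F) :
    (p.coeff.sum fun u c => c * q.coeff u) = q.coeff.sum fun v c => c * p.coeff v := by
  classical
  rw [Finsupp.sum, Finsupp.sum]
  have h1 : ∑ a ∈ p.coeff.support, p.coeff a * q.coeff a = ∑ a ∈ p.coeff.support ∪ q.coeff.support, p.coeff a * q.coeff a :=
    Finset.sum_subset Finset.subset_union_left
      (fun x _ hx => by rw [Finsupp.notMem_support_iff.mp hx, zero_mul])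
  have h2 : ∑ a ∈ q.coeff.support, q.coeff a * p.coeff a = ∑ a ∈ p.coeff.support ∪ q.coeff.support, q.coeff a * p.coeff a :=
    Finset.sum_subset Finset.subset_union_right
      (fun x _ hx => by rw [Finsupp.notMem_support_iff.mp hx, zero_mul])
  rw [h1, h2]
  exact Finset.sum_congr rfl fun x _ => mul_comm _ _

lemma pair_eq (w : Mon) (p : F) :
    (p * cF).coeff (FreeMonoid.ofList w) + (G p).coeff (FreeMonoid.ofList w)
      = p.coeff.sum fun u c => c * (T w).coeff u := by
  induction p using MonoidAlgebra.induction_linear with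
  | zero => simp
  | add f g hf hg =>
      rw [add_mul, map_add, cadd, cadd, MonoidAlgebra.coeff_add]
      rw [Finsupp.sum_add_index' (fun u => by rw [zero_mul]) (fun u c1 c2 => add_mul c1 c2 _)]
      rw [← hf, ← hg]
      ring
  | single x r =>
      have hG : G (MonoidAlgebra.single x r) = r • gMon (FreeMonoid.toList x) := by
        rw [G, LinearMap.comp_apply]
        erw [Finsupp.lsum_single]
        rfl
      have hmul : MonoidAlgebra.single x r * cF = r • mono (FreeMonoid.toList x ++ [false]) := by
        rw [cF, mono, mono, MonoidAlgebra.single_mul_single]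
        rw [MonoidAlgebra.smul_single]
        rw [FreeMonoid.ofList_append, FreeMonoid.ofList_toList]
        simp
      have hsum : ((MonoidAlgebra.single x r : F).coeff.sum fun u c => c * (T w).coeff u) = r * (T w).coeff x := by
        rw [MonoidAlgebra.coeff_single]
        erw [Finsupp.sum_single_index (by rw [zero_mul])]
      rw [hG, hmul, MonoidAlgebra.coeff_smul_apply, MonoidAlgebra.coeff_smul_apply, hsum]
      rw [smul_eq_mul, smul_eq_mul, ← mul_add, key w (FreeMonoid.toList x)]
      rfl

lemma betaHat_iota (p : F) : betaHat (ι p) = betaF p := by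
  induction p using MonoidAlgebra.induction_linear with
  | zero => simp
  | add f g hf hg => rw [map_add, map_add, map_add, hf, hg]
  | single x r =>
      have h1 : ι (MonoidAlgebra.single x r)
          = r • Finsupp.single (some (FreeMonoid.toList x)) (1 : ℚ) := by
        rw [ι, LinearMap.comp_apply]
        erw [Finsupp.lsum_single]
        rfl
      have h2 : betaF (MonoidAlgebra.single x r) = r • beta (FreeMonoid.toList x) := by
        rw [betaF, LinearMap.comp_apply]
        erw [Finsupp.lsum_single]
        rfl
      rw [h1, h2, map_smul]
      congr 1
      rw [betaHat]
      erw [Finsupp.lsum_single]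
      show (1 : ℚ) • beta (FreeMonoid.toList x) = beta (FreeMonoid.toList x)
      rw [one_smul]

lemma beta_nil : beta [] = 1 := by
  show (Psi (deg [])).coeff (FreeMonoid.ofList []) = 1
  have h : deg [] = 0 := rfl
  rw [h]
  show (1 : F).coeff (FreeMonoid.ofList []) = 1
  rw [MonoidAlgebra.one_def]
  exact Finsupp.single_eq_same

lemma deg_pos (a : Bool) (t : Mon) : ∃ n, deg (a :: t) = n + 1 := by
  cases a
  · exact ⟨deg t, deg_false t⟩
  · exact ⟨deg t + 1, deg_true t⟩

lemma betaF_T (w : Mon) (hw : w ≠ []) : betaF (T w) = beta w := by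
  obtain ⟨n, hn⟩ : ∃ n, deg w = n + 1 := by
    cases w with
    | nil => exact absurd rfl hw
    | cons a t => exact deg_pos a t
  have h1 : betaF (T w) = (T w).coeff.sum fun v c => c * beta (FreeMonoid.toList v) := by
    rw [betaF, LinearMap.comp_apply]
    erw [Finsupp.lsum_apply]
    refine Finsupp.sum_congr fun v _ => ?_
    rw [LinearMap.toSpanSingleton_apply, smul_eq_mul]
  rw [h1]
  have h2 : ((T w).coeff.sum fun v c => c * beta (FreeMonoid.toList v))
      = (T w).coeff.sum fun v c => c * (Psi n).coeff v := by
    refine Finsupp.sum_congr fun v hv => ?_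
    have hne : (T w).coeff (FreeMonoid.ofList (FreeMonoid.toList v)) ≠ 0 := by
      rw [FreeMonoid.ofList_toList]
      exact Finsupp.mem_support_iff.mp hv
    have hdeg := T_deg w (FreeMonoid.toList v) hne
    rw [hn] at hdeg
    have hdv : deg (FreeMonoid.toList v) = n := by omega
    congr 1
    show (Psi (deg (FreeMonoid.toList v))).coeff (FreeMonoid.ofList (FreeMonoid.toList v)) = (Psi n).coeff v
    rw [hdv, FreeMonoid.ofList_toList]
  rw [h2, pair_comm (T w) (Psi n), ← pair_eq w (Psi n)]
  have hb : beta w = (Psi n * cF).coeff (FreeMonoid.ofList w) + (G (Psi n)).coeff (FreeMonoid.ofList w) := by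
    show (Psi (deg w)).coeff (FreeMonoid.ofList w) = _
    rw [hn]
    show (Psi n * cF + G (Psi n)).coeff (FreeMonoid.ofList w) = _
    rw [cadd]
  rw [hb]

end Aux

/-- For every cd-monomial `v`, `β(S(v)) = β(v)`. -/
theorem beta_S (v : Mon) : betaHat (Smap v) = beta v := by
  cases v with
  | nil =>
      rw [Smap, if_pos rfl]
      have h0 : SexpF (toExps ([] : Mon)) = 0 := T_nil
      rw [h0, map_zero, zero_add, beta_nil]
      rw [ehat, betaHat]
      erw [Finsupp.lsum_single]
      show (1 : ℚ) • (1 : ℚ) = 1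
      rw [one_smul]
  | cons a t =>
      rw [Smap, if_neg (by simp), add_zero, betaHat_iota]
      exact betaF_T (a :: t) (by simp)
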